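/- arXiv:cs/0611012 — 3 statements merged into one kernel-verified Lean document; each statement's English description precedes it below -/
import Mathlib

section
/- Suppose Ψ : ℝ → Matrix (Fin m) (Fin m) ℂ has entries that are each q-times differentiable at 0. Then the q-th derivative at 0 of F(x) = det(Ψ(x)) equals the sum over all tuples (q_1, ..., q_m) of nonnegative integers with q_1 + ... + q_m = q of the multinomial coefficient q!/(q_1! ⋯ q_m!) times the determinant of the matrix whose i-th row is the q_i-th derivative at 0 of the i-th row of Ψ. -/
/-!
Expanding the determinant over permutations, each term is a product of `m` entries, one from
each row. The multinomial Leibniz rule for such a product (by induction on `m` from the binomial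
one) distributes the `q` derivatives over the rows as a tuple `k` summing to `q`; regrouping the
permutation sum for each fixed `k` gives the determinant of the matrix whose `i`-th row is
differentiated `k i` times.
-/

open Finset

theorem Finset.Nat.sum_antidiagonalTuple_succ {M : Type*} [AddCommMonoid M] (k n : ℕ)
    (f : (Fin (k + 1) → ℕ) → M) :
    ∑ l ∈ antidiagonalTuple (k + 1) n, f l =
      ∑ p ∈ antidiagonal n, ∑ x ∈ antidiagonalTuple k p.2, f (Fin.cons p.1 x) := by
  -- `antidiagonalTuple (k + 1) n` is defined on lists as a `flatMap` over `antidiagonal n`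
  change (Multiset.map f (Multiset.ofList (List.flatMap _ (List.Nat.antidiagonal n)))).sum =
    (Multiset.map _ (Multiset.ofList (List.Nat.antidiagonal n))).sum
  rw [← Multiset.coe_bind, Multiset.map_bind, Multiset.sum_bind]
  simp only [← Multiset.map_coe, Multiset.map_map]
  rfl

theorem Nat.multinomial_univ_fin_cons (a : ℕ) {k : ℕ} (x : Fin k → ℕ) :
    multinomial univ (Fin.cons a x : Fin (k + 1) → ℕ) =
      (a + ∑ i, x i).choose a * multinomial univ x := by
  have hcons := multinomial_spec univ (Fin.cons a x : Fin (k + 1) → ℕ)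
  rw [Fin.prod_univ_succ, Fin.sum_univ_succ] at hcons
  simp only [Fin.cons_zero, Fin.cons_succ] at hcons
  have hpos : 0 < a.factorial * ∏ i, (x i).factorial := by positivity
  refine Nat.eq_of_mul_eq_mul_left hpos ?_
  rw [hcons, ← Nat.add_choose_mul_factorial_mul_factorial, ← Nat.choose_symm_add,
    ← multinomial_spec univ x]
  ring

theorem Nat.cast_multinomial {α K : Type*} [Field K] [CharZero K] (s : Finset α) (f : α → ℕ) :
    (multinomial s f : K) = (∑ i ∈ s, f i).factorial / ∏ i ∈ s, ((f i).factorial : K) := by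
  rw [← Nat.cast_prod, eq_div_iff (Nat.cast_ne_zero.2 (prod_factorial_pos s f).ne'),
    ← Nat.cast_mul, mul_comm, multinomial_spec]

theorem Matrix.det_eq_sum_sign_mul_prod {n R : Type*} [Fintype n] [DecidableEq n] [CommRing R]
    (M : Matrix n n R) :
    M.det = ∑ σ : Equiv.Perm n, ((Equiv.Perm.sign σ : ℤ) : R) * ∏ i, M i (σ i) := by
  rw [← det_transpose, det_apply']
  rfl

section

variable {𝕜 𝔸 : Type*} [NontriviallyNormedField 𝕜] [NormedCommRing 𝔸] [NormedAlgebra 𝕜 𝔸]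

theorem iteratedDeriv_fin_prod {m q : ℕ} {f : Fin m → 𝕜 → 𝔸} {x : 𝕜}
    (hf : ∀ i, ContDiffAt 𝕜 q (f i) x) :
    iteratedDeriv q (fun y => ∏ i, f i y) x =
      ∑ k ∈ Nat.antidiagonalTuple m q,
        (Nat.multinomial univ k : 𝔸) * ∏ i, iteratedDeriv (k i) (f i) x := by
  induction m generalizing q with
  | zero => cases q <;> simp [iteratedDeriv_const]
  | succ m ih =>
    simp only [Fin.prod_univ_succ]
    rw [iteratedDeriv_fun_mul (hf 0) (contDiffAt_prod fun i _ => hf i.succ),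
      ← Nat.sum_antidiagonal_eq_sum_range_succ
        (fun a b => (q.choose a : 𝔸) * iteratedDeriv a (f 0) x *
          iteratedDeriv b (fun y => ∏ i : Fin m, f i.succ y) x),
      Nat.sum_antidiagonalTuple_succ]
    refine sum_congr rfl fun p hp => ?_
    have hle : p.2 ≤ q := by have := mem_antidiagonal.mp hp; omega
    rw [ih fun i => (hf i.succ).of_le (by exact_mod_cast hle), mul_sum]
    refine sum_congr rfl fun k hk => ?_
    rw [Nat.multinomial_univ_fin_cons, Nat.mem_antidiagonalTuple.mp hk, mem_antidiagonal.mp hp]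
    simp only [Fin.cons_zero, Fin.cons_succ]
    push_cast
    ring

theorem iteratedDeriv_det {m q : ℕ} {A : 𝕜 → Matrix (Fin m) (Fin m) 𝔸} {x : 𝕜}
    (hA : ∀ i j, ContDiffAt 𝕜 q (fun y => A y i j) x) :
    iteratedDeriv q (fun y => (A y).det) x =
      ∑ k ∈ Nat.antidiagonalTuple m q, (Nat.multinomial univ k : 𝔸) *
        (Matrix.of fun i j => iteratedDeriv (k i) (fun y => A y i j) x).det := by
  simp only [Matrix.det_eq_sum_sign_mul_prod, Matrix.of_apply, mul_sum]
  rw [iteratedDeriv_fun_sum fun σ _ =>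
      contDiffAt_const.mul (contDiffAt_prod fun i _ => hA i (σ i)),
    sum_comm]
  refine sum_congr rfl fun σ _ => ?_
  rw [iteratedDeriv_const_mul _ (contDiffAt_prod fun i _ => hA i (σ i)),
    iteratedDeriv_fin_prod fun i => hA i (σ i), mul_sum]
  refine sum_congr rfl fun k _ => ?_
  ring

end

theorem stmt_8 (m q : ℕ) (Ψ : ℝ → Matrix (Fin m) (Fin m) ℂ)
    (hΨ : ∀ i j, ContDiffAt ℝ (q : ℕ∞) (fun x => Ψ x i j) 0) :
    iteratedDeriv q (fun x => (Ψ x).det) 0 =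
      ∑ k ∈ Finset.Nat.antidiagonalTuple m q,
        (Nat.factorial q : ℂ) / (∏ i, (Nat.factorial (k i) : ℂ)) *
          Matrix.det (Matrix.of fun i j =>
            iteratedDeriv (k i) (fun x => Ψ x i j) 0) := by
  rw [iteratedDeriv_det hΨ]
  refine sum_congr rfl fun k hk => ?_
  rw [Nat.cast_multinomial, Nat.mem_antidiagonalTuple.mp hk]
end

section
/- Let ω_1, ..., ω_n and σ_1, ..., σ_m be positive reals (m ≥ n), and consider the m×m matrix Ξ_α (for a permutation α of {0,...,n−1}) with entries Ξ[i,j] = (1/σ_j)^{m−i} for i ≤ τ = m−n, and Ξ[i,j] = (1/(ω_{i−τ} σ_j))^{m+α(i−τ)} for i > τ. Then the sum over permutations α of det(Ξ_α) equals (−1)^{n(m+1)} Δ_m(Σ) Δ_n(Ω) / ((∏_i σ_i)^{m+n−1} (∏_i ω_i)^{m+n−1}), where Δ_m(Σ) = ∏_{i<j}(σ_j − σ_i) and Δ_n(Ω) = ∏_{i<j}(ω_j − ω_i). -/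
open Finset Matrix

section AuxLemmas

theorem sign_revPerm_fin (k : ℕ) :
    Equiv.Perm.sign (Fin.revPerm : Equiv.Perm (Fin k)) = (-1) ^ (k.choose 2) := by
  induction k with
  | zero => decide
  | succ k ih =>
    have hdec : (Fin.revPerm : Equiv.Perm (Fin (k+1))) =
        finRotate (k+1) * (Fin.revPerm : Equiv.Perm (Fin k)).viaFintypeEmbedding Fin.castSuccEmb := by
      ext i
      refine Fin.lastCases ?_ (fun j => ?_) i
      · rw [Equiv.Perm.mul_apply, Equiv.Perm.viaFintypeEmbedding_apply_notMem_range, finRotate_last]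
        · simp [Fin.rev_last]
        · simp only [Set.mem_range, not_exists, Fin.castSuccEmb]
          intro a h
          have := congrArg Fin.val h
          simp at this
          omega
      · rw [Equiv.Perm.mul_apply]
        have h1 : (Fin.revPerm : Equiv.Perm (Fin k)).viaFintypeEmbedding Fin.castSuccEmb
            (Fin.castSuccEmb j) = Fin.castSuccEmb (Fin.revPerm j) :=
          Equiv.Perm.viaFintypeEmbedding_apply_image _ _ _
        have h1' : (Fin.revPerm.viaFintypeEmbedding Fin.castSuccEmb) (Fin.castSucc j)
            = (Fin.revPerm j).castSucc := h1
        rw [h1', finRotate_succ_apply]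
        have hjk : (j : ℕ) < k := j.isLt
        have hlt : ((Fin.revPerm j).castSucc : Fin (k+1)) < Fin.last k := by
          rw [Fin.lt_iff_val_lt_val]
          simp [Fin.val_rev]
          omega
        rw [Fin.val_add_one_of_lt hlt]
        simp [Fin.val_rev]
        omega
    rw [hdec, _root_.map_mul, sign_finRotate, Equiv.Perm.viaFintypeEmbedding_sign, ih, ← pow_add]
    congr 1
    rw [Nat.choose_succ_succ, Nat.choose_one_right, Nat.add_sub_cancel]

lemma prod_pairs {N : ℕ} (f : Fin N → Fin N → ℝ) :
    ∏ p ∈ Finset.univ.filter (fun p : Fin N × Fin N => p.1 < p.2), f p.1 p.2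
      = ∏ i, ∏ j ∈ Finset.Ioi i, f i j := by
  rw [Finset.prod_filter, ← Finset.univ_product_univ, Finset.prod_product]
  refine Finset.prod_congr rfl fun i _ => ?_
  rw [← Finset.filter_lt_eq_Ioi, Finset.prod_filter]

lemma prod_Ioi_swap {N : ℕ} (g : Fin N → ℝ) :
    ∏ i, ∏ j ∈ Finset.Ioi i, g j = ∏ j, g j ^ (j : ℕ) := by
  rw [Finset.prod_comm' (t' := Finset.univ) (s' := fun j => Finset.Iio j)]
  · exact Finset.prod_congr rfl fun j _ => by
      rw [Finset.prod_const, Fin.card_Iio]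
  · intro i j
    simp [Finset.mem_Ioi, Finset.mem_Iio]

lemma sum_compl_fin {N : ℕ} : ∑ i : Fin N, (N - 1 - (i : ℕ)) = N.choose 2 := by
  rw [Fin.sum_univ_eq_sum_range, ← Finset.sum_range_reflect]
  rw [Nat.choose_two_right, ← Finset.sum_range_id]
  refine Finset.sum_congr rfl fun i hi => ?_
  rw [Finset.mem_range] at hi
  omega

lemma inv_vandermonde {N : ℕ} (v : Fin N → ℝ) (hv : ∀ i, v i ≠ 0) :
    ∏ i, ∏ j ∈ Finset.Ioi i, ((v j)⁻¹ - (v i)⁻¹)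
      = (-1) ^ (N.choose 2) * (∏ i, ∏ j ∈ Finset.Ioi i, (v j - v i))
          * ((∏ i, v i) ^ (N - 1))⁻¹ := by
  have h1 : ∀ i j : Fin N, (v j)⁻¹ - (v i)⁻¹
      = (-1) * ((v j - v i) * ((v i)⁻¹ * (v j)⁻¹)) := by
    intro i j
    rw [inv_sub_inv (hv j) (hv i), div_eq_mul_inv, mul_inv]
    ring
  calc ∏ i, ∏ j ∈ Finset.Ioi i, ((v j)⁻¹ - (v i)⁻¹)
      = ∏ i, ∏ j ∈ Finset.Ioi i, ((-1) * ((v j - v i) * ((v i)⁻¹ * (v j)⁻¹))) := by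
        exact Finset.prod_congr rfl fun i _ => Finset.prod_congr rfl fun j _ => h1 i j
    _ = (∏ i : Fin N, ∏ _j ∈ Finset.Ioi i, (-1 : ℝ)) * ((∏ i, ∏ j ∈ Finset.Ioi i, (v j - v i))
          * ((∏ i, ∏ j ∈ Finset.Ioi i, (v i)⁻¹) * (∏ i, ∏ j ∈ Finset.Ioi i, (v j)⁻¹))) := by
        simp_rw [Finset.prod_mul_distrib]
    _ = (-1) ^ (N.choose 2) * (∏ i, ∏ j ∈ Finset.Ioi i, (v j - v i))
          * ((∏ i, v i) ^ (N - 1))⁻¹ := by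
        have hP1 : (∏ i : Fin N, ∏ _j ∈ Finset.Ioi i, (-1 : ℝ)) = (-1) ^ (N.choose 2) := by
          simp_rw [Finset.prod_const, Fin.card_Ioi]
          rw [Finset.prod_pow_eq_pow_sum, sum_compl_fin]
        have hP2 : (∏ i : Fin N, ∏ _j ∈ Finset.Ioi i, (v i)⁻¹)
            * (∏ i : Fin N, ∏ j ∈ Finset.Ioi i, (v j)⁻¹) = ((∏ i, v i) ^ (N - 1))⁻¹ := by
          rw [prod_Ioi_swap (fun j => (v j)⁻¹)]
          simp_rw [Finset.prod_const, Fin.card_Ioi]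
          rw [← Finset.prod_mul_distrib]
          have : ∀ i : Fin N, (v i)⁻¹ ^ (N - 1 - (i : ℕ)) * (v i)⁻¹ ^ (i : ℕ)
              = (v i)⁻¹ ^ (N - 1) := by
            intro i
            rw [← pow_add]
            congr 1
            have := i.isLt
            omega
          rw [Finset.prod_congr rfl fun i _ => this i]
          simp_rw [inv_pow]
          rw [Finset.prod_inv_distrib, Finset.prod_pow]
        rw [hP1, hP2]
        ring

lemma choose_succ_two (k : ℕ) : (k + 1).choose 2 = k.choose 2 + k := by
  have h := Nat.choose_succ_succ k 1
  simp only [Nat.succ_eq_add_one, Nat.choose_one_right] at h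
  norm_num at h
  omega

lemma choose_add_two (a b : ℕ) : (a + b).choose 2 = a.choose 2 + b.choose 2 + a * b := by
  induction b with
  | zero => simp
  | succ b ih =>
    have h1 := choose_succ_two (a + b)
    have h2 := choose_succ_two b
    have h3 : a * (b + 1) = a * b + a := by ring
    rw [show a + (b + 1) = (a + b) + 1 by omega]
    omega

lemma sign_combine (m n : ℕ) (hmn : n ≤ m) :
    (-1 : ℝ) ^ ((m - n).choose 2) * ((-1) ^ (m.choose 2) * (-1) ^ (n.choose 2))
      = (-1) ^ (n * (m + 1)) := by
  have key : ∀ k : ℕ, (-1 : ℝ) ^ (2 * k) = 1 := fun k => by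
    rw [pow_mul, neg_one_sq, one_pow]
  obtain ⟨t, rfl⟩ : ∃ t, m = n + t := ⟨m - n, by omega⟩
  rw [show n + t - n = t by omega, choose_add_two]
  rw [← pow_add, ← pow_add]
  rw [show t.choose 2 + ((n.choose 2 + t.choose 2 + n * t) + n.choose 2)
      = 2 * (t.choose 2 + n.choose 2) + n * t by ring]
  obtain ⟨k, hk⟩ : Even (n * (n + 1)) := Nat.even_mul_succ_self n
  rw [show n * (n + t + 1) = 2 * k + n * t by
    have : n * (n + t + 1) = n * (n + 1) + n * t := by ring
    omega]
  rw [pow_add, pow_add, key, key]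

end AuxLemmas

theorem stmt_10 (m n : ℕ) (hn : 0 < n) (hmn : n ≤ m) (τ : ℕ) (hτ : τ = m - n)
    (σ : Fin m → ℝ) (ω : Fin n → ℝ) (hσ : ∀ j, 0 < σ j) (hω : ∀ i, 0 < ω i) :
    (∑ α : Equiv.Perm (Fin n),
        Matrix.det (Matrix.of fun i j : Fin m =>
          if h : (i : ℕ) < τ then (1 / σ j) ^ (m - 1 - (i : ℕ))
          else (1 / (ω ⟨(i : ℕ) - τ, by have := i.isLt; omega⟩ * σ j)) ^
            (m + (α ⟨(i : ℕ) - τ, by have := i.isLt; omega⟩ : ℕ))))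
      = (-1 : ℝ) ^ (n * (m + 1)) *
        (∏ p ∈ Finset.univ.filter (fun p : Fin m × Fin m => p.1 < p.2),
          (σ p.2 - σ p.1)) *
        (∏ p ∈ Finset.univ.filter (fun p : Fin n × Fin n => p.1 < p.2),
          (ω p.2 - ω p.1)) /
        ((∏ i, σ i) ^ (m + n - 1) * (∏ i, ω i) ^ (m + n - 1)) := by
  have hm : m = n + τ := by omega
  set x : Fin m → ℝ := fun j => (σ j)⁻¹ with hx
  set y : Fin n → ℝ := fun k => (ω k)⁻¹ with hy
  have hτm : τ ≤ m := by omega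
  -- embeddings
  set g : Fin τ ↪ Fin m := Fin.castLEEmb hτm with hg
  set f : Fin n ↪ Fin m :=
    ⟨fun k => ⟨τ + (k : ℕ), by have := k.isLt; omega⟩, fun a b hab => by
      apply Fin.ext
      have := congrArg Fin.val hab
      simpa using this⟩ with hf
  set ρ : Equiv.Perm (Fin m) := (Fin.revPerm : Equiv.Perm (Fin τ)).viaFintypeEmbedding g
    with hρ
  -- facts about ρ
  have hρ_lt : ∀ (i : Fin m) (h : (i : ℕ) < τ), (ρ i : ℕ) = τ - 1 - (i : ℕ) := by
    intro i h
    have hi : i = g ⟨(i : ℕ), h⟩ := Fin.ext rfl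
    rw [hρ, hi, Equiv.Perm.viaFintypeEmbedding_apply_image]
    show ((Fin.castLE hτm) (Fin.revPerm ⟨(i : ℕ), h⟩) : ℕ) = τ - 1 - (i : ℕ)
    simp [Fin.val_rev]
    omega
  have hρ_ge : ∀ (i : Fin m), ¬((i : ℕ) < τ) → ρ i = i := by
    intro i h
    rw [hρ]
    apply Equiv.Perm.viaFintypeEmbedding_apply_notMem_range
    rintro ⟨a, ha⟩
    have := congrArg Fin.val ha
    simp [hg] at this
    omega
  -- facts about the extension of α
  have hα_lt : ∀ (α : Equiv.Perm (Fin n)) (i : Fin m), (i : ℕ) < τ →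
      α.viaFintypeEmbedding f i = i := by
    intro α i h
    apply Equiv.Perm.viaFintypeEmbedding_apply_notMem_range
    rintro ⟨a, ha⟩
    have := congrArg Fin.val ha
    have h' : τ ≤ ((f a : Fin m) : ℕ) := Nat.le_add_right _ _
    omega
  have hα_ge : ∀ (α : Equiv.Perm (Fin n)) (i : Fin m) (h : ¬((i : ℕ) < τ)),
      α.viaFintypeEmbedding f i
        = f (α ⟨(i : ℕ) - τ, by have := i.isLt; omega⟩) := by
    intro α i h
    have hi : i = f ⟨(i : ℕ) - τ, by have := i.isLt; omega⟩ := by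
      apply Fin.ext
      show (i : ℕ) = τ + ((i : ℕ) - τ)
      omega
    conv_lhs => rw [hi]
    rw [Equiv.Perm.viaFintypeEmbedding_apply_image]
  -- the key computation for each α
  have hdet : ∀ α : Equiv.Perm (Fin n),
      Matrix.det (Matrix.of fun i j : Fin m =>
        if h : (i : ℕ) < τ then (1 / σ j) ^ (m - 1 - (i : ℕ))
        else (1 / (ω ⟨(i : ℕ) - τ, by have := i.isLt; omega⟩ * σ j)) ^
          (m + (α ⟨(i : ℕ) - τ, by have := i.isLt; omega⟩ : ℕ)))
      = (((Equiv.Perm.sign α : ℤ) : ℝ) * ∏ k : Fin n, y k ^ ((α k : ℕ))) *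
        (((Equiv.Perm.sign ρ : ℤ) : ℝ) * (∏ k : Fin n, y k ^ m) * (∏ j : Fin m, x j ^ n) *
          (Matrix.vandermonde x).det) := by
    intro α
    set P : Equiv.Perm (Fin m) := ρ * α.viaFintypeEmbedding f with hP
    have hP_lt : ∀ (i : Fin m), (i : ℕ) < τ → (P i : ℕ) = τ - 1 - (i : ℕ) := by
      intro i h
      rw [hP, Equiv.Perm.mul_apply, hα_lt α i h, hρ_lt i h]
    have hP_ge : ∀ (i : Fin m) (h : ¬((i : ℕ) < τ)),
        (P i : ℕ) = τ + (α ⟨(i : ℕ) - τ, by have := i.isLt; omega⟩ : ℕ) := by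
      intro i h
      rw [hP, Equiv.Perm.mul_apply, hα_ge α i h, hρ_ge]
      · rfl
      · exact Nat.not_lt.mpr (Nat.le_add_right _ _)
    set v : Fin m → ℝ := fun i =>
      if h : (i : ℕ) < τ then 1
      else y ⟨(i : ℕ) - τ, by have := i.isLt; omega⟩ ^
        (m + (α ⟨(i : ℕ) - τ, by have := i.isLt; omega⟩ : ℕ)) with hv
    set A : Matrix (Fin m) (Fin m) ℝ := Matrix.of fun i j =>
      x j ^ n * (((Matrix.vandermonde x)ᵀ).submatrix P id) i j with hA
    have hmat : (Matrix.of fun i j : Fin m =>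
        if h : (i : ℕ) < τ then (1 / σ j) ^ (m - 1 - (i : ℕ))
        else (1 / (ω ⟨(i : ℕ) - τ, by have := i.isLt; omega⟩ * σ j)) ^
          (m + (α ⟨(i : ℕ) - τ, by have := i.isLt; omega⟩ : ℕ)))
        = Matrix.of fun i j => v i * A i j := by
      ext i j
      simp only [Matrix.of_apply, hA, hv, Matrix.submatrix_apply, Matrix.transpose_apply,
        Matrix.vandermonde_apply, id_eq]
      by_cases h : (i : ℕ) < τ
      · rw [dif_pos h, dif_pos h, hP_lt i h, one_mul, ← pow_add, one_div]
        congr 1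
        omega
      · rw [dif_neg h, dif_neg h, hP_ge i h, ← pow_add]
        rw [show n + (τ + (α ⟨(i : ℕ) - τ, by have := i.isLt; omega⟩ : ℕ))
            = m + (α ⟨(i : ℕ) - τ, by have := i.isLt; omega⟩ : ℕ) by omega]
        rw [one_div, mul_inv, mul_pow]
    rw [hmat]
    rw [Matrix.det_mul_column v A]
    rw [hA, Matrix.det_mul_row (fun j => x j ^ n) (((Matrix.vandermonde x)ᵀ).submatrix P id)]
    rw [Matrix.det_permute P ((Matrix.vandermonde x)ᵀ), Matrix.det_transpose]
    -- product of v
    have hvprod : (∏ i : Fin m, v i) = ∏ k : Fin n, y k ^ (m + (α k : ℕ)) := by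
      have h1 : (∏ i : Fin m, v i) = ∏ i ∈ Finset.range m,
          (if h : i < τ then 1 else if h2 : i - τ < n then
            y ⟨i - τ, h2⟩ ^ (m + (α ⟨i - τ, h2⟩ : ℕ)) else 1) := by
        rw [← Fin.prod_univ_eq_prod_range]
        refine Finset.prod_congr rfl fun i _ => ?_
        rw [hv]
        dsimp only
        by_cases h : (i : ℕ) < τ
        · rw [dif_pos h, dif_pos h]
        · rw [dif_neg h, dif_neg h, dif_pos (show (i : ℕ) - τ < n by have := i.isLt; omega)]
      rw [h1, show Finset.range m = Finset.range (τ + n) by congr 1; omega,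
        Finset.prod_range_add]
      have h2 : ∀ i ∈ Finset.range τ, (if h : i < τ then (1:ℝ) else if h2 : i - τ < n then
          y ⟨i - τ, h2⟩ ^ (m + (α ⟨i - τ, h2⟩ : ℕ)) else 1) = 1 := by
        intro i hi
        rw [Finset.mem_range] at hi
        rw [dif_pos hi]
      rw [Finset.prod_eq_one h2, one_mul]
      have h3 : ∀ k ∈ Finset.range n,
          (if h : τ + k < τ then (1:ℝ) else if h2 : τ + k - τ < n then
            y ⟨τ + k - τ, h2⟩ ^ (m + (α ⟨τ + k - τ, h2⟩ : ℕ)) else 1)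
          = (fun k' => if h2 : k' < n then
              y ⟨k', h2⟩ ^ (m + (α ⟨k', h2⟩ : ℕ)) else 1) k := by
        intro k hk
        rw [Finset.mem_range] at hk
        dsimp only
        rw [dif_neg (show ¬ (τ + k < τ) by omega)]
        simp only [Nat.add_sub_cancel_left]
      rw [Finset.prod_congr rfl h3, ← Fin.prod_univ_eq_prod_range]
      refine Finset.prod_congr rfl fun k _ => ?_
      rw [dif_pos k.isLt]
    rw [hvprod]
    have hsgn : ((Equiv.Perm.sign P : ℤ) : ℝ)
        = ((Equiv.Perm.sign ρ : ℤ) : ℝ) * ((Equiv.Perm.sign α : ℤ) : ℝ) := by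
      rw [hP, _root_.map_mul, hρ, Equiv.Perm.viaFintypeEmbedding_sign,
        Equiv.Perm.viaFintypeEmbedding_sign]
      push_cast
      ring
    rw [hsgn]
    simp_rw [pow_add, Finset.prod_mul_distrib]
    ring
  simp only [hdet]
  rw [← Finset.sum_mul]
  have hsum : (∑ α : Equiv.Perm (Fin n),
      ((Equiv.Perm.sign α : ℤ) : ℝ) * ∏ k : Fin n, y k ^ ((α k : ℕ)))
      = (Matrix.vandermonde y).det := by
    rw [← Matrix.det_transpose, Matrix.det_apply]
    refine Finset.sum_congr rfl fun α _ => ?_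
    rw [Units.smul_def, zsmul_eq_mul]
    congr 1
  rw [hsum]
  have hS : (0:ℝ) < ∏ i, σ i := Finset.prod_pos fun i _ => hσ i
  have hW : (0:ℝ) < ∏ i, ω i := Finset.prod_pos fun i _ => hω i
  have hxdet : (Matrix.vandermonde x).det
      = (-1)^(m.choose 2) * (∏ i, ∏ j ∈ Finset.Ioi i, (σ j - σ i))
        * ((∏ i, σ i)^(m-1))⁻¹ := by
    rw [Matrix.det_vandermonde]
    exact inv_vandermonde σ (fun i => (hσ i).ne')
  have hydet : (Matrix.vandermonde y).det
      = (-1)^(n.choose 2) * (∏ i, ∏ j ∈ Finset.Ioi i, (ω j - ω i))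
        * ((∏ i, ω i)^(n-1))⁻¹ := by
    rw [Matrix.det_vandermonde]
    exact inv_vandermonde ω (fun i => (hω i).ne')
  have hxn : (∏ j : Fin m, x j ^ n) = ((∏ i, σ i)^n)⁻¹ := by
    simp only [hx, inv_pow]
    rw [Finset.prod_inv_distrib, Finset.prod_pow]
  have hym : (∏ k : Fin n, y k ^ m) = ((∏ i, ω i)^m)⁻¹ := by
    simp only [hy, inv_pow]
    rw [Finset.prod_inv_distrib, Finset.prod_pow]
  have hsρ : ((Equiv.Perm.sign ρ : ℤ) : ℝ) = (-1)^(τ.choose 2) := by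
    rw [hρ, Equiv.Perm.viaFintypeEmbedding_sign, sign_revPerm_fin]
    push_cast
    ring
  have hsign : (-1 : ℝ) ^ (τ.choose 2) * ((-1) ^ (m.choose 2) * (-1) ^ (n.choose 2))
      = (-1) ^ (n * (m + 1)) := by
    rw [hτ]
    exact sign_combine m n hmn
  rw [hxdet, hydet, hxn, hym, hsρ,
    prod_pairs (fun i j => σ j - σ i), prod_pairs (fun i j => ω j - ω i), ← hsign]
  obtain ⟨p, rfl⟩ : ∃ p, n = p + 1 := ⟨n - 1, by omega⟩
  subst hm
  rw [show p + 1 + τ - 1 = p + τ by omega, show p + 1 - 1 = p by omega,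
    show p + 1 + τ + (p + 1) - 1 = p + τ + (p + 1) by omega]
  field_simp
  ring
end

section
/- Suppose a random variable λ ≥ 0 has c.d.f. F satisfying F(x) = α x^N + o(x^N) as x → 0⁺, with α > 0 and N a positive integer, and F(x) ≤ C x^N for all x > 0 for some constant C. Then, with output SNR γ = γ̄ λ, the SER integral P_s(γ̄) = (a√b)/(2√π) ∫_0^∞ e^{−b u} u^{−1/2} F_γ(u) du, where F_γ(u) = F(u/γ̄), satisfies γ̄^N P_s(γ̄) → (a/(2√π)) α b^{−N} Γ(N + 1/2) as γ̄ → ∞. -/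
open Filter Topology Asymptotics MeasureTheory

theorem stmt_15 (N : ℕ) (hN : 0 < N) (α : ℝ) (hα : 0 < α)
    (a b : ℝ) (ha : 0 < a) (hb : 0 < b) (C : ℝ)
    (F : ℝ → ℝ) (hF0 : ∀ x, 0 ≤ F x) (hF1 : ∀ x, F x ≤ 1) (hmono : Monotone F)
    (hbound : ∀ x > (0 : ℝ), F x ≤ C * x ^ N)
    (hexp : (fun x => F x - α * x ^ N) =o[nhdsWithin 0 (Set.Ioi 0)] fun x => x ^ N) :
    Tendsto (fun γbar : ℝ => γbar ^ N *
        ((a * Real.sqrt b) / (2 * Real.sqrt Real.pi) *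
          ∫ u in Set.Ioi (0 : ℝ),
            Real.exp (-b * u) * u ^ (-(1 : ℝ) / 2) * F (u / γbar)))
      atTop
      (𝓝 (a / (2 * Real.sqrt Real.pi) * α * b ^ (-(N : ℝ)) *
        Real.Gamma ((N : ℝ) + 1/2))) := by
  have hC : 0 ≤ C := by
    have h1 := hbound 1 one_pos
    have h2 := hF0 1
    simp at h1
    linarith
  have hFmeas : Measurable F := hmono.measurable
  -- the dominated convergence step
  have key : Tendsto
      (fun γ : ℝ => ∫ u in Set.Ioi (0 : ℝ),
        γ ^ N * (Real.exp (-b * u) * u ^ (-(1 : ℝ) / 2) * F (u / γ)))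
      atTop
      (𝓝 (∫ u in Set.Ioi (0 : ℝ),
        Real.exp (-b * u) * u ^ (-(1 : ℝ) / 2) * (α * u ^ N))) := by
    apply tendsto_integral_filter_of_dominated_convergence
      (bound := fun u => C * (u ^ ((N : ℝ) - 1/2) * Real.exp (-b * u)))
    · filter_upwards with γ
      have hm : Measurable (fun u : ℝ => u ^ (-(1:ℝ)/2)) := by measurability
      exact ((((measurable_id.const_mul (-b)).exp.mul hm).mul
        (hFmeas.comp (measurable_id.div_const γ))).const_mul _).aestronglyMeasurable
    · filter_upwards [eventually_gt_atTop (0 : ℝ)] with γ hγ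
      rw [ae_restrict_iff' measurableSet_Ioi]
      filter_upwards with u hu
      have hu0 : (0 : ℝ) < u := hu
      have huγ : 0 < u / γ := div_pos hu0 hγ
      have hnn : 0 ≤ γ ^ N * (Real.exp (-b * u) * u ^ (-(1 : ℝ) / 2) * F (u / γ)) := by
        have := hF0 (u / γ)
        positivity
      rw [Real.norm_eq_abs, abs_of_nonneg hnn]
      have h1 : F (u / γ) ≤ C * (u / γ) ^ N := hbound _ huγ
      have hpos : (0:ℝ) ≤ γ ^ N * (Real.exp (-b * u) * u ^ (-(1 : ℝ) / 2)) := by positivity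
      calc γ ^ N * (Real.exp (-b * u) * u ^ (-(1 : ℝ) / 2) * F (u / γ))
          ≤ γ ^ N * (Real.exp (-b * u) * u ^ (-(1 : ℝ) / 2) * (C * (u / γ) ^ N)) := by
            nlinarith [mul_le_mul_of_nonneg_left h1 hpos]
        _ = C * (u ^ ((N : ℝ) - 1/2) * Real.exp (-b * u)) := by
            rw [div_pow, show (N:ℝ) - 1/2 = (-(1:ℝ)/2) + (N:ℝ) by ring,
              Real.rpow_add hu0, Real.rpow_natCast]
            field_simp
    · refine Integrable.const_mul ?_ C
      have := integrableOn_rpow_mul_exp_neg_mul_rpow (p := 1) (s := (N : ℝ) - 1/2) (b := b)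
        (by have : (0:ℝ) ≤ N := Nat.cast_nonneg N; linarith) one_pos hb
      simpa [Real.rpow_one, IntegrableOn] using this
    · rw [ae_restrict_iff' measurableSet_Ioi]
      filter_upwards with u hu
      have hu0 : (0 : ℝ) < u := hu
      -- show γ^N * F(u/γ) → α u^N
      have htend : Tendsto (fun γ : ℝ => u / γ) atTop (nhdsWithin 0 (Set.Ioi 0)) := by
        rw [tendsto_nhdsWithin_iff]
        constructor
        · exact tendsto_const_nhds.div_atTop tendsto_id
        · filter_upwards [eventually_gt_atTop (0:ℝ)] with γ hγ
          exact div_pos hu0 hγ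
      have hlo := hexp.comp_tendsto htend
      have hlo2 := hlo.mul_isBigO (isBigO_refl (fun γ : ℝ => γ ^ N) atTop)
      have heq1 : (fun γ : ℝ => ((u / γ) ^ N) * γ ^ N) =ᶠ[atTop] fun _ => u ^ N := by
        filter_upwards [eventually_gt_atTop (0:ℝ)] with γ hγ
        rw [div_pow, div_mul_cancel₀ _ (pow_ne_zero _ hγ.ne')]
      have heq2 : (fun γ : ℝ => (F (u / γ) - α * (u / γ) ^ N) * γ ^ N) =ᶠ[atTop]
          fun γ => γ ^ N * F (u / γ) - α * u ^ N := by
        filter_upwards [eventually_gt_atTop (0:ℝ)] with γ hγ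
        have h := div_mul_cancel₀ (u ^ N) (pow_ne_zero N hγ.ne')
        rw [← div_pow] at h
        linear_combination (-α) * h
      have hlo3 : (fun γ : ℝ => γ ^ N * F (u / γ) - α * u ^ N) =o[atTop]
          (fun _ : ℝ => u ^ N) := hlo2.congr' heq2 heq1
      have hten : Tendsto (fun γ : ℝ => γ ^ N * F (u / γ)) atTop (𝓝 (α * u ^ N)) := by
        have h0 : Tendsto (fun γ : ℝ => γ ^ N * F (u / γ) - α * u ^ N) atTop (𝓝 0) :=
          (isLittleO_const_iff (by positivity : u ^ N ≠ 0)).mp hlo3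
        simpa using h0.add_const (α * u ^ N)
      have h2 := hten.const_mul (Real.exp (-b * u) * u ^ (-(1 : ℝ) / 2))
      exact h2.congr fun γ => by ring
  -- compute the limit value
  have hval : ∫ u in Set.Ioi (0 : ℝ),
      Real.exp (-b * u) * u ^ (-(1 : ℝ) / 2) * (α * u ^ N)
      = α * ((1/b) ^ ((N:ℝ) + 1/2) * Real.Gamma ((N:ℝ) + 1/2)) := by
    rw [← Real.integral_rpow_mul_exp_neg_mul_Ioi (by positivity : (0:ℝ) < (N:ℝ) + 1/2) hb,
      ← integral_const_mul]
    refine setIntegral_congr_fun measurableSet_Ioi fun u hu => ?_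
    have hu0 : (0 : ℝ) < u := hu
    rw [show ((N:ℝ) + 1/2) - 1 = (-(1:ℝ)/2) + (N:ℝ) by ring, Real.rpow_add hu0,
      Real.rpow_natCast, neg_mul]
    ring
  have hfinal : (a * Real.sqrt b) / (2 * Real.sqrt Real.pi) *
      (α * ((1/b) ^ ((N:ℝ) + 1/2) * Real.Gamma ((N:ℝ) + 1/2)))
      = a / (2 * Real.sqrt Real.pi) * α * b ^ (-(N : ℝ)) * Real.Gamma ((N : ℝ) + 1/2) := by
    rw [Real.sqrt_eq_rpow, one_div b, Real.inv_rpow hb.le, ← Real.rpow_neg hb.le,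
      show b ^ (-(N:ℝ)) = b ^ ((1:ℝ)/2) * b ^ (-((N:ℝ) + 1/2)) by
        rw [← Real.rpow_add hb]; congr 1; ring]
    ring
  have hrw : ∀ γ : ℝ, γ ^ N *
      ((a * Real.sqrt b) / (2 * Real.sqrt Real.pi) *
        ∫ u in Set.Ioi (0 : ℝ),
          Real.exp (-b * u) * u ^ (-(1 : ℝ) / 2) * F (u / γ))
      = (a * Real.sqrt b) / (2 * Real.sqrt Real.pi) *
        ∫ u in Set.Ioi (0 : ℝ),
          γ ^ N * (Real.exp (-b * u) * u ^ (-(1 : ℝ) / 2) * F (u / γ)) := by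
    intro γ
    rw [integral_const_mul]
    ring
  have hmain := key.const_mul ((a * Real.sqrt b) / (2 * Real.sqrt Real.pi))
  rw [hval, hfinal] at hmain
  exact hmain.congr fun γ => (hrw γ).symm
end
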